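/- arXiv:1407.3928 — 6 statements merged into one kernel-verified Lean document; each statement's English description precedes it below -/
import Mathlib

section
/- Let A be a ring and ∂, ∂̄ : A → A additive maps with ∂∘∂ = 0, ∂̄∘∂̄ = 0 and ∂∘∂̄ + ∂̄∘∂ = 0. Let θ₁, θ₂, η₁, η₂ ∈ A be elements such that: (i) each of them is killed by both ∂ and ∂̄; (ii) any two of them (including an element with itself) anticommute, i.e. α·β = −β·α, and each squares to zero; (iii) each α among them satisfies the degree-one Leibniz rules ∂(α·x) = (∂α)·x − α·(∂x) and ∂̄(α·x) = (∂̄α)·x − α·(∂̄x) for all x ∈ A. Define ∂' := ∂ + L_{θ₂} + L_{η₁} and ∂̄' := ∂̄ − L_{η₂} + L_{θ₁}, where L_α(x) := α·x. Then ∂'∘∂' = 0, ∂̄'∘∂̄' = 0 and ∂'∘∂̄' + ∂̄'∘∂' = 0. -/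
/-! Write `∂' = ∂ + L_a` and `∂̄' = ∂̄ + L_b` with `a = θ₂ + η₁` and `b = θ₁ - η₂`. Since the four
elements are closed, the Leibniz rules say that left multiplication by each of them anticommutes
with `∂` and `∂̄`, and so does left multiplication by anything in their additive span. The cross
terms then cancel, leaving `∂'∂' = ∂∂ + L_{a²}`, `∂̄'∂̄' = ∂̄∂̄ + L_{b²}` and
`∂'∂̄' + ∂̄'∂' = ∂∂̄ + ∂̄∂ + L_{ab+ba}`. Finally `a` and `b` again square to zero and anticommute,
because the anticommutator is biadditive. -/

open AddSubgroup

section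

variable {A : Type*} [Ring A]

def twist (d : A →+ A) (a : A) : A →+ A := d + AddMonoidHom.mulLeft a

theorem twist_apply (d : A →+ A) (a x : A) : twist d a x = d x + a * x := rfl

def anticommLeftMul (d : A →+ A) : AddSubgroup A where
  carrier := {a | ∀ x, d (a * x) = -(a * d x)}
  zero_mem' := by simp
  add_mem' {a b} ha hb x := by rw [add_mul, map_add, ha x, hb x, add_mul, neg_add]
  neg_mem' {a} ha x := by rw [neg_mul, map_neg, ha x, neg_mul]

theorem mem_anticommLeftMul {d : A →+ A} {a : A} :
    a ∈ anticommLeftMul d ↔ ∀ x, d (a * x) = -(a * d x) := Iff.rfl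

theorem twist_twist {d : A →+ A} {a : A} (ha : a ∈ anticommLeftMul d) (x : A) :
    twist d a (twist d a x) = d (d x) + a * a * x := by
  simp only [twist_apply, map_add, mem_anticommLeftMul.mp ha, mul_assoc]
  abel

theorem twist_twist_add_twist_twist {d d' : A →+ A} {a b : A} (hb : b ∈ anticommLeftMul d)
    (ha : a ∈ anticommLeftMul d') (x : A) :
    twist d a (twist d' b x) + twist d' b (twist d a x) =
      d (d' x) + d' (d x) + (a * b + b * a) * x := by
  simp only [twist_apply, map_add, add_mul, mem_anticommLeftMul.mp ha,
    mem_anticommLeftMul.mp hb, mul_assoc]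
  abel

theorem mul_add_mul_eq_zero_of_mem_closure {S : Set A}
    (hS : ∀ α ∈ S, ∀ β ∈ S, α * β + β * α = 0) {a b : A} (ha : a ∈ closure S)
    (hb : b ∈ closure S) : a * b + b * a = 0 := by
  induction ha, hb using closure_induction₂ with
  | mem α β hα hβ => exact hS α hα β hβ
  | zero_left => simp
  | zero_right => simp
  | add_left _ _ _ _ _ _ h₁ h₂ => rw [add_mul, mul_add, add_add_add_comm, h₁, h₂, add_zero]
  | add_right _ _ _ _ _ _ h₁ h₂ => rw [add_mul, mul_add, add_add_add_comm, h₁, h₂, add_zero]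
  | neg_left _ _ _ _ h => rw [neg_mul, mul_neg, ← neg_add, h, neg_zero]
  | neg_right _ _ _ _ h => rw [neg_mul, mul_neg, ← neg_add, h, neg_zero]

theorem mul_self_eq_zero_of_mem_closure {S : Set A} (hsq : ∀ α ∈ S, α * α = 0)
    (hS : ∀ α ∈ S, ∀ β ∈ S, α * β + β * α = 0) {a : A} (ha : a ∈ closure S) : a * a = 0 := by
  induction ha using closure_induction with
  | mem α hα => exact hsq α hα
  | zero => simp
  | add x y hx hy h₁ h₂ =>
    have hxy := mul_add_mul_eq_zero_of_mem_closure hS hx hy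
    calc (x + y) * (x + y) = x * x + y * y + (x * y + y * x) := by noncomm_ring
      _ = 0 := by rw [h₁, h₂, hxy, add_zero, add_zero]
  | neg x _ h => rw [neg_mul_neg, h]

end

/-- Given two anticommuting differentials `∂, ∂̄` on a ring `A` and elements
`θ₁, θ₂, η₁, η₂` which are closed under both differentials, pairwise anticommute,
square to zero, and satisfy the degree-one Leibniz rules, the twisted operators
`∂' := ∂ + L_{θ₂} + L_{η₁}` and `∂̄' := ∂̄ − L_{η₂} + L_{θ₁}` satisfy
`∂'∘∂' = 0`, `∂̄'∘∂̄' = 0` and `∂'∘∂̄' + ∂̄'∘∂' = 0`. -/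
theorem stmt1 {A : Type*} [Ring A] (del delbar : A → A)
    (haddd : ∀ x y : A, del (x + y) = del x + del y)
    (hadddb : ∀ x y : A, delbar (x + y) = delbar x + delbar y)
    (hd2 : ∀ x : A, del (del x) = 0)
    (hdb2 : ∀ x : A, delbar (delbar x) = 0)
    (hanti : ∀ x : A, del (delbar x) + delbar (del x) = 0)
    (θ₁ θ₂ η₁ η₂ : A)
    (hclosed : ∀ α ∈ ({θ₁, θ₂, η₁, η₂} : Set A), del α = 0 ∧ delbar α = 0)
    (hacomm : ∀ α ∈ ({θ₁, θ₂, η₁, η₂} : Set A), ∀ β ∈ ({θ₁, θ₂, η₁, η₂} : Set A),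
      α * β = -(β * α))
    (hsq : ∀ α ∈ ({θ₁, θ₂, η₁, η₂} : Set A), α * α = 0)
    (hLeib : ∀ α ∈ ({θ₁, θ₂, η₁, η₂} : Set A), ∀ x : A,
      del (α * x) = del α * x - α * del x ∧ delbar (α * x) = delbar α * x - α * delbar x) :
    (∀ x : A, (fun y => del y + θ₂ * y + η₁ * y) ((fun y => del y + θ₂ * y + η₁ * y) x) = 0) ∧
    (∀ x : A, (fun y => delbar y - η₂ * y + θ₁ * y) ((fun y => delbar y - η₂ * y + θ₁ * y) x) = 0) ∧
    (∀ x : A, (fun y => del y + θ₂ * y + η₁ * y) ((fun y => delbar y - η₂ * y + θ₁ * y) x)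
      + (fun y => delbar y - η₂ * y + θ₁ * y) ((fun y => del y + θ₂ * y + η₁ * y) x) = 0) := by
  set S : Set A := {θ₁, θ₂, η₁, η₂}
  let D := AddMonoidHom.mk' del haddd
  let D' := AddMonoidHom.mk' delbar hadddb
  have hS : ∀ α ∈ S, ∀ β ∈ S, α * β + β * α = 0 := fun α hα β hβ =>
    eq_neg_iff_add_eq_zero.mp (hacomm α hα β hβ)
  have hLeibD : closure S ≤ anticommLeftMul D ⊓ anticommLeftMul D' := (closure_le _).mpr
    fun α hα => ⟨fun x => by simp [D, (hLeib α hα x).1, (hclosed α hα).1],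
      fun x => by simp [D', (hLeib α hα x).2, (hclosed α hα).2]⟩
  have ha : θ₂ + η₁ ∈ closure S := add_mem (subset_closure (by simp [S]))
    (subset_closure (by simp [S]))
  have hb : θ₁ - η₂ ∈ closure S := sub_mem (subset_closure (by simp [S]))
    (subset_closure (by simp [S]))
  have hdel : (fun y => del y + θ₂ * y + η₁ * y) = twist D (θ₂ + η₁) := by
    ext y; rw [twist_apply, add_mul, ← add_assoc]; rfl
  have hdelbar : (fun y => delbar y - η₂ * y + θ₁ * y) = twist D' (θ₁ - η₂) := by
    ext y; rw [twist_apply, sub_mul]; simp only [D', AddMonoidHom.mk'_apply]; abel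
  rw [hdel, hdelbar]
  refine ⟨fun x => ?_, fun x => ?_, fun x => ?_⟩
  · rw [twist_twist (hLeibD ha).1, mul_self_eq_zero_of_mem_closure hsq hS ha, zero_mul, add_zero]
    exact hd2 x
  · rw [twist_twist (hLeibD hb).2, mul_self_eq_zero_of_mem_closure hsq hS hb, zero_mul, add_zero]
    exact hdb2 x
  · rw [twist_twist_add_twist_twist (hLeibD hb).1 (hLeibD ha).2,
      mul_add_mul_eq_zero_of_mem_closure hS ha hb, zero_mul, add_zero]
    exact hanti x
end

section
/- Let (V^k)_{k∈ℤ} be a family of complex vector spaces together with linear maps ∂ : V^k → V^{k+1} and ∂̄ : V^k → V^{k+1} satisfying ∂∘∂ = 0, ∂̄∘∂̄ = 0 and ∂∘∂̄ + ∂̄∘∂ = 0. Suppose that in every degree j the cohomologies H^j_∂ := ker(∂ : V^j → V^{j+1})/∂(V^{j−1}) and H^j_∂̄ := ker(∂̄ : V^j → V^{j+1})/∂̄(V^{j−1}), as well as H^j_BC := (ker ∂ ∩ ker ∂̄ in V^j)/(∂∂̄)(V^{j−2}) and H^j_A := ker(∂∂̄ : V^j → V^{j+2})/(∂(V^{j−1})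 + ∂̄(V^{j−1})), are finite dimensional. Then for every k ∈ ℤ the inequality dim H^k_BC + dim H^k_A ≥ dim H^k_∂ + dim H^k_∂̄ holds. -/
open LinearMap Submodule Module

/-! The map `H_BC → H_∂ ⊕ H_∂̄`, `[x] ↦ ([x], [x])`, followed by `H_∂ ⊕ H_∂̄ → H_A`,
`([a], [b]) ↦ [a] - [b]`, is exact in the middle: if `a - b = ∂u + ∂̄v`, then
`a - ∂u = b + ∂̄v` is both `∂`- and `∂̄`-closed and represents `([a], [b])`. Hence
`dim H_∂ + dim H_∂̄ ≤ dim H_BC + dim H_A`, and the finiteness of `H_BC` and `H_A` forces that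
of `H_∂` and `H_∂̄`. Everything happens in a single degree and uses only the inclusions among
the spaces of closed and exact elements there. -/

section ExactInMiddle

variable {𝕜 A B C : Type*} [DivisionRing 𝕜] [AddCommGroup A] [Module 𝕜 A] [AddCommGroup B]
  [Module 𝕜 B] [AddCommGroup C] [Module 𝕜 C] [FiniteDimensional 𝕜 A] [FiniteDimensional 𝕜 C]

theorem LinearMap.finiteDimensional_of_ker_le_range (f : A →ₗ[𝕜] B) (g : B →ₗ[𝕜] C)
    (hfg : ker g ≤ range f) : FiniteDimensional 𝕜 B := by
  have : FiniteDimensional 𝕜 (ker g) := Submodule.finiteDimensional_of_le hfg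
  have : FiniteDimensional 𝕜 (B ⧸ ker g) := g.quotKerEquivRange.symm.finiteDimensional
  exact Module.Finite.of_submodule_quotient (ker g)

theorem LinearMap.finrank_le_finrank_add_finrank_of_ker_le_range (f : A →ₗ[𝕜] B)
    (g : B →ₗ[𝕜] C) (hfg : ker g ≤ range f) : finrank 𝕜 B ≤ finrank 𝕜 A + finrank 𝕜 C := by
  have := f.finiteDimensional_of_ker_le_range g hfg
  calc finrank 𝕜 B = finrank 𝕜 (ker g) + finrank 𝕜 (range g) := by
        rw [add_comm, finrank_range_add_finrank_ker]
    _ ≤ finrank 𝕜 A + finrank 𝕜 C :=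
        add_le_add ((Submodule.finrank_mono hfg).trans (finrank_range_le f))
          (Submodule.finrank_le _)

end ExactInMiddle

section Subquotient

variable {R E : Type*} [Ring R] [AddCommGroup E] [Module R E]

/-- The subquotient `Z / (B ∩ Z)`; no inclusion `B ≤ Z` is assumed. -/
abbrev Subquotient (Z B : Submodule R E) : Type _ :=
  ↥Z ⧸ B.comap Z.subtype

namespace Subquotient

variable {Z Z' B B' : Submodule R E}

def map (hZ : Z ≤ Z') (hB : B ≤ B') : Subquotient Z B →ₗ[R] Subquotient Z' B' :=
  mapQ _ _ (inclusion hZ) fun _ hx ↦ hB hx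

@[simp]
theorem map_mk (hZ : Z ≤ Z') (hB : B ≤ B') (x : Z) :
    map hZ hB (Submodule.Quotient.mk x) = Submodule.Quotient.mk (inclusion hZ x) :=
  rfl

theorem mk_eq_mk_iff {x y : Z} :
    (Submodule.Quotient.mk x : Subquotient Z B) = Submodule.Quotient.mk y ↔
      (x : E) - y ∈ B :=
  Submodule.Quotient.eq _

variable {Z₁ Z₂ Z B₁ B₂ B : Submodule R E}

theorem ker_le_range (hB₁ : B₁ ≤ Z₁) (hB₂ : B₂ ≤ Z₂) (hB₁' : B ≤ B₁) (hB₂' : B ≤ B₂)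
    (hZ₁ : Z₁ ≤ Z) (hZ₂ : Z₂ ≤ Z) :
    ker (map hZ₁ le_sup_left ∘ₗ fst R _ _ - map hZ₂ (le_sup_right (a := B₁)) ∘ₗ snd R _ _) ≤
      range ((map inf_le_left hB₁').prod (map (Z' := Z₂) inf_le_right hB₂')) := by
  rintro ⟨q₁, q₂⟩ hq
  obtain ⟨a, rfl⟩ := Submodule.Quotient.mk_surjective _ q₁
  obtain ⟨b, rfl⟩ := Submodule.Quotient.mk_surjective _ q₂
  have hab : (a : E) - b ∈ B₁ ⊔ B₂ := by
    simpa [← Submodule.Quotient.mk_sub, Submodule.Quotient.mk_eq_zero] using hq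
  obtain ⟨u, hu, v, hv, huv⟩ := Submodule.mem_sup.mp hab
  have hc : (a : E) - u = b + v := by linear_combination (norm := abel) -huv
  have hcZ : (a : E) - u ∈ Z₁ ⊓ Z₂ :=
    ⟨Z₁.sub_mem a.2 (hB₁ hu), hc ▸ Z₂.add_mem b.2 (hB₂ hv)⟩
  refine ⟨Submodule.Quotient.mk ⟨_, hcZ⟩, Prod.ext ?_ ?_⟩
  · simpa [mk_eq_mk_iff] using hu
  · simpa [mk_eq_mk_iff, hc] using hv

end Subquotient

end Subquotient

theorem Subquotient.finrank_add_finrank_le {𝕜 E : Type*} [DivisionRing 𝕜] [AddCommGroup E]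
    [Module 𝕜 E] {Z₁ Z₂ Z B₁ B₂ B : Submodule 𝕜 E} (hB₁ : B₁ ≤ Z₁) (hB₂ : B₂ ≤ Z₂)
    (hB₁' : B ≤ B₁) (hB₂' : B ≤ B₂) (hZ₁ : Z₁ ≤ Z) (hZ₂ : Z₂ ≤ Z)
    [FiniteDimensional 𝕜 (Subquotient (Z₁ ⊓ Z₂) B)]
    [FiniteDimensional 𝕜 (Subquotient Z (B₁ ⊔ B₂))] :
    finrank 𝕜 (Subquotient Z₁ B₁) + finrank 𝕜 (Subquotient Z₂ B₂) ≤
      finrank 𝕜 (Subquotient (Z₁ ⊓ Z₂) B) + finrank 𝕜 (Subquotient Z (B₁ ⊔ B₂)) := by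
  have hexact := Subquotient.ker_le_range hB₁ hB₂ hB₁' hB₂' hZ₁ hZ₂
  have := finiteDimensional_of_ker_le_range _ _ hexact
  have : FiniteDimensional 𝕜 (Subquotient Z₁ B₁) :=
    .of_surjective (fst 𝕜 _ (Subquotient Z₂ B₂)) fst_surjective
  have : FiniteDimensional 𝕜 (Subquotient Z₂ B₂) :=
    .of_surjective (snd 𝕜 (Subquotient Z₁ B₁) _) snd_surjective
  rw [← finrank_prod]
  exact finrank_le_finrank_add_finrank_of_ker_le_range _ _ hexact

theorem stmt2_general (V : ℤ → Type*) [∀ k, AddCommGroup (V k)] [∀ k, Module ℂ (V k)]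
    (del delbar : ∀ k, V k →ₗ[ℂ] V (k + 1))
    (hdel : ∀ k, (del (k + 1)).comp (del k) = 0)
    (hdelbar : ∀ k, (delbar (k + 1)).comp (delbar k) = 0)
    (hanti : ∀ k, (del (k + 1)).comp (delbar k) + (delbar (k + 1)).comp (del k) = 0)
    (hfinBC : ∀ k : ℤ, FiniteDimensional ℂ
      (↥(ker (del (k + 1 + 1)) ⊓ ker (delbar (k + 1 + 1))) ⧸
        ((range ((del (k + 1)).comp (delbar k))).comap
          (ker (del (k + 1 + 1)) ⊓ ker (delbar (k + 1 + 1))).subtype)))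
    (hfinA : ∀ k : ℤ, FiniteDimensional ℂ
      (↥(ker ((del (k + 1 + 1 + 1)).comp (delbar (k + 1 + 1)))) ⧸
        ((range (del (k + 1)) ⊔ range (delbar (k + 1))).comap
          (ker ((del (k + 1 + 1 + 1)).comp (delbar (k + 1 + 1)))).subtype))) :
    ∀ k : ℤ,
      finrank ℂ (↥(ker (del (k + 1 + 1))) ⧸
          ((range (del (k + 1))).comap (ker (del (k + 1 + 1))).subtype))
        + finrank ℂ (↥(ker (delbar (k + 1 + 1))) ⧸
          ((range (delbar (k + 1))).comap (ker (delbar (k + 1 + 1))).subtype))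
      ≤ finrank ℂ (↥(ker (del (k + 1 + 1)) ⊓ ker (delbar (k + 1 + 1))) ⧸
          ((range ((del (k + 1)).comp (delbar k))).comap
            (ker (del (k + 1 + 1)) ⊓ ker (delbar (k + 1 + 1))).subtype))
        + finrank ℂ (↥(ker ((del (k + 1 + 1 + 1)).comp (delbar (k + 1 + 1)))) ⧸
          ((range (del (k + 1)) ⊔ range (delbar (k + 1))).comap
            (ker ((del (k + 1 + 1 + 1)).comp (delbar (k + 1 + 1)))).subtype)) := by
  intro k
  have := hfinBC k
  have := hfinA k
  have anticomm (j : ℤ) (x : V j) : del (j + 1) (delbar j x) = -delbar (j + 1) (del j x) :=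
    eq_neg_of_add_eq_zero_left (LinearMap.congr_fun (hanti j) x)
  refine Subquotient.finrank_add_finrank_le ?_ ?_ ?_ ?_ ?_ ?_
  · exact range_le_ker_iff.mpr (hdel (k + 1))
  · exact range_le_ker_iff.mpr (hdelbar (k + 1))
  · exact range_comp_le_range _ _
  · rintro _ ⟨x, rfl⟩
    exact ⟨-del k x, by simp [anticomm]⟩
  · intro x hx
    simp [anticomm, mem_ker.mp hx]
  · exact ker_le_ker_comp _ _

/-- Frölicher-type inequality for a ℤ-graded complex vector space with two
anticommuting degree-one differentials `∂, ∂̄`: in every degree, if the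
Dolbeault-type, Bott–Chern and Aeppli cohomologies are finite dimensional, then
`dim H_BC + dim H_A ≥ dim H_∂ + dim H_∂̄`.  (The arbitrary degree is written as
`k + 1 + 1` so that all indices match syntactically.) -/
theorem stmt2 (V : ℤ → Type*) [∀ k, AddCommGroup (V k)] [∀ k, Module ℂ (V k)]
    (del delbar : ∀ k, V k →ₗ[ℂ] V (k + 1))
    (hdel : ∀ k, (del (k + 1)).comp (del k) = 0)
    (hdelbar : ∀ k, (delbar (k + 1)).comp (delbar k) = 0)
    (hanti : ∀ k, (del (k + 1)).comp (delbar k) + (delbar (k + 1)).comp (del k) = 0)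
    (hfindel : ∀ k : ℤ, FiniteDimensional ℂ
      (↥(ker (del (k + 1 + 1))) ⧸
        ((range (del (k + 1))).comap (ker (del (k + 1 + 1))).subtype)))
    (hfindelbar : ∀ k : ℤ, FiniteDimensional ℂ
      (↥(ker (delbar (k + 1 + 1))) ⧸
        ((range (delbar (k + 1))).comap (ker (delbar (k + 1 + 1))).subtype)))
    (hfinBC : ∀ k : ℤ, FiniteDimensional ℂ
      (↥(ker (del (k + 1 + 1)) ⊓ ker (delbar (k + 1 + 1))) ⧸
        ((range ((del (k + 1)).comp (delbar k))).comap
          (ker (del (k + 1 + 1)) ⊓ ker (delbar (k + 1 + 1))).subtype)))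
    (hfinA : ∀ k : ℤ, FiniteDimensional ℂ
      (↥(ker ((del (k + 1 + 1 + 1)).comp (delbar (k + 1 + 1)))) ⧸
        ((range (del (k + 1)) ⊔ range (delbar (k + 1))).comap
          (ker ((del (k + 1 + 1 + 1)).comp (delbar (k + 1 + 1)))).subtype))) :
    ∀ k : ℤ,
      finrank ℂ (↥(ker (del (k + 1 + 1))) ⧸
          ((range (del (k + 1))).comap (ker (del (k + 1 + 1))).subtype))
        + finrank ℂ (↥(ker (delbar (k + 1 + 1))) ⧸
          ((range (delbar (k + 1))).comap (ker (delbar (k + 1 + 1))).subtype))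
      ≤ finrank ℂ (↥(ker (del (k + 1 + 1)) ⊓ ker (delbar (k + 1 + 1))) ⧸
          ((range ((del (k + 1)).comp (delbar k))).comap
            (ker (del (k + 1 + 1)) ⊓ ker (delbar (k + 1 + 1))).subtype))
        + finrank ℂ (↥(ker ((del (k + 1 + 1 + 1)).comp (delbar (k + 1 + 1)))) ⧸
          ((range (del (k + 1)) ⊔ range (delbar (k + 1))).comap
            (ker ((del (k + 1 + 1 + 1)).comp (delbar (k + 1 + 1)))).subtype)) :=
  stmt2_general V del delbar hdel hdelbar hanti hfinBC hfinA
end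

section
/- Under the Kähler identities, the Bott–Chern Laplacian Δ_BC := (∂∂̄)(∂̄*∂*) + (∂̄*∂*)(∂∂̄) + (∂̄*∂)(∂*∂̄) + (∂*∂̄)(∂̄*∂) + ∂̄*∂̄ + ∂*∂ satisfies Δ_BC = Δ_∂̄² + ∂*∂ + ∂̄*∂̄, where Δ_∂̄² = Δ_∂̄ ∘ Δ_∂̄. -/
/-!
The Kähler identities express `∂̄*` and `∂*` as commutators with `Λ`. Since `∂² = ∂̄² = 0`
and `∂∂̄ = -∂̄∂`, this forces `∂` to anticommute with `∂̄*`, `∂̄` with `∂*`, and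
`Δ_∂ = Δ_∂̄ =: Δ`. Then `Δ` commutes with `∂` and `∂*`, so
`Δ² = Δ (∂∂* + ∂*∂) = ∂ Δ ∂* + ∂* Δ ∂`, and expanding `Δ = ∂̄∂̄* + ∂̄*∂̄` in the middle and
reordering with the anticommutation relations gives exactly the four quartic terms of `Δ_BC`.
-/

open LinearMap

section Ring

variable {A : Type*} [Ring A]

theorem anticomm_commutator_of_mul_self_eq_zero {L p : A} (hp : p * p = 0) :
    p * (L * p - p * L) + (L * p - p * L) * p = 0 := by
  linear_combination (norm := noncomm_ring) L * hp - hp * L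

theorem anticomm_commutators_of_anticomm {L p q : A} (hpq : p * q + q * p = 0) :
    p * (L * q - q * L) + (L * q - q * L) * p + q * (L * p - p * L) + (L * p - p * L) * q = 0 := by
  linear_combination (norm := noncomm_ring) L * hpq - hpq * L

theorem commute_mul_add_mul_of_anticomm {a b c : A} (hab : a * b + b * a = 0)
    (hac : a * c + c * a = 0) : Commute a (b * c + c * b) := by
  unfold Commute SemiconjBy
  linear_combination (norm := noncomm_ring) hab * c - b * hac + hac * b - c * hab

theorem bottChern_quartic_eq_sq {a b a' b' : A} (hab : a * b + b * a = 0)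
    (ha'b' : a' * b' + b' * a' = 0) (hab' : a * b' + b' * a = 0) (hba' : b * a' + a' * b = 0)
    (hΔ : a * a' + a' * a = b * b' + b' * b) :
    (a * b) * (b' * a') + (b' * a') * (a * b) + (b' * a) * (a' * b) + (a' * b) * (b' * a)
      = (b * b' + b' * b) * (b * b' + b' * b) := by
  have hΔa : Commute a (b * b' + b' * b) := commute_mul_add_mul_of_anticomm hab hab'
  have hΔa' : Commute a' (b * b' + b' * b) :=
    commute_mul_add_mul_of_anticomm (by rwa [add_comm]) ha'b'
  unfold Commute SemiconjBy at hΔa hΔa'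
  linear_combination (norm := noncomm_ring) -(hab' * (b * a')) + (b' * a) * hba'
    - ha'b' * (b * a) + (b' * a') * hab + hΔa * a' + hΔa' * a + (b * b' + b' * b) * hΔ

end Ring

section Algebra

variable {R A : Type*} [CommRing R] [Ring A] [Algebra R A]

theorem anticomm_of_commutator_eq_smul {L p s : A} {c : R} (hc : IsUnit c) (hp : p * p = 0)
    (hk : L * p - p * L = c • s) : p * s + s * p = 0 := by
  have h := anticomm_commutator_of_mul_self_eq_zero (L := L) hp
  rwa [hk, mul_smul_comm, smul_mul_assoc, ← smul_add, hc.smul_eq_zero] at h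

theorem laplacian_eq_of_commutators_eq_smul {L p q ps qs : A} {c : R} (hc : IsUnit c)
    (hpq : p * q + q * p = 0) (hk₁ : L * p - p * L = c • qs) (hk₂ : L * q - q * L = (-c) • ps) :
    p * ps + ps * p = q * qs + qs * q := by
  have h := anticomm_commutators_of_anticomm (L := L) hpq
  rw [hk₁, hk₂] at h
  simp only [mul_smul_comm, smul_mul_assoc, neg_smul, mul_neg, neg_mul] at h
  have key : c • (q * qs + qs * q - (p * ps + ps * p)) = 0 := by
    rw [← h, smul_sub, smul_add, smul_add]; abel
  rw [hc.smul_eq_zero, sub_eq_zero] at key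
  exact key.symm

end Algebra

theorem stmt10_general {V : Type*} [AddCommGroup V] [Module ℂ V]
    (p q ps qs Lam : V →ₗ[ℂ] V)
    (hp : p ∘ₗ p = 0) (hq : q ∘ₗ q = 0) (hpq : p ∘ₗ q + q ∘ₗ p = 0)
    (hpsqs : ps ∘ₗ qs + qs ∘ₗ ps = 0)
    (hk1 : Lam ∘ₗ p - p ∘ₗ Lam = Complex.I • qs)
    (hk2 : Lam ∘ₗ q - q ∘ₗ Lam = (-Complex.I) • ps) :
    (p ∘ₗ q) ∘ₗ (qs ∘ₗ ps) + (qs ∘ₗ ps) ∘ₗ (p ∘ₗ q)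
      + (qs ∘ₗ p) ∘ₗ (ps ∘ₗ q) + (ps ∘ₗ q) ∘ₗ (qs ∘ₗ p)
      + qs ∘ₗ q + ps ∘ₗ p
    = (q ∘ₗ qs + qs ∘ₗ q) ∘ₗ (q ∘ₗ qs + qs ∘ₗ q) + ps ∘ₗ p + qs ∘ₗ q := by
  simp only [← Module.End.mul_eq_comp] at *
  have hI : IsUnit Complex.I := Complex.I_ne_zero.isUnit
  have hpqs := anticomm_of_commutator_eq_smul hI hp hk1
  have hqps := anticomm_of_commutator_eq_smul hI.neg hq hk2
  have hΔ := laplacian_eq_of_commutators_eq_smul hI hpq hk1 hk2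
  rw [bottChern_quartic_eq_sq hpq hpsqs hpqs hqps hΔ, add_right_comm]

/-- Under the Kähler identities, the Bott–Chern Laplacian
`Δ_BC = (∂∂̄)(∂̄*∂*) + (∂̄*∂*)(∂∂̄) + (∂̄*∂)(∂*∂̄) + (∂*∂̄)(∂̄*∂) + ∂̄*∂̄ + ∂*∂`
satisfies `Δ_BC = Δ_∂̄² + ∂*∂ + ∂̄*∂̄`. -/
theorem stmt10 {V : Type*} [AddCommGroup V] [Module ℂ V]
    (p q ps qs Lam : V →ₗ[ℂ] V)
    (hp : p ∘ₗ p = 0) (hq : q ∘ₗ q = 0) (hpq : p ∘ₗ q + q ∘ₗ p = 0)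
    (hps : ps ∘ₗ ps = 0) (hqs : qs ∘ₗ qs = 0) (hpsqs : ps ∘ₗ qs + qs ∘ₗ ps = 0)
    (hk1 : Lam ∘ₗ p - p ∘ₗ Lam = Complex.I • qs)
    (hk2 : Lam ∘ₗ q - q ∘ₗ Lam = (-Complex.I) • ps) :
    (p ∘ₗ q) ∘ₗ (qs ∘ₗ ps) + (qs ∘ₗ ps) ∘ₗ (p ∘ₗ q)
      + (qs ∘ₗ p) ∘ₗ (ps ∘ₗ q) + (ps ∘ₗ q) ∘ₗ (qs ∘ₗ p)
      + qs ∘ₗ q + ps ∘ₗ p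
    = (q ∘ₗ qs + qs ∘ₗ q) ∘ₗ (q ∘ₗ qs + qs ∘ₗ q) + ps ∘ₗ p + qs ∘ₗ q :=
  stmt10_general p q ps qs Lam hp hq hpq hpsqs hk1 hk2
end

section
/- Under the Kähler identities, the Aeppli Laplacian Δ_A := ∂∂* + ∂̄∂̄* + (∂̄*∂*)(∂∂̄) + (∂∂̄)(∂̄*∂*) + (∂∂̄*)(∂̄∂*) + (∂̄∂*)(∂∂̄*) satisfies Δ_A = Δ_∂̄² + ∂∂* + ∂̄∂̄*, where Δ_∂̄² = Δ_∂̄ ∘ Δ_∂̄. -/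
/-!
Conjugating `∂² = 0` by `Λ` and using the Kähler identity `[Λ, ∂] = i ∂̄*` gives
`∂∂̄* + ∂̄*∂ = 0`; likewise `∂̄∂* + ∂*∂̄ = 0`, and conjugating `∂∂̄ + ∂̄∂ = 0` gives
`Δ_∂ = Δ_∂̄`. With these anticommutation relations, expanding `Δ_∂ Δ_∂̄` produces exactly
the four quartic terms of the Aeppli Laplacian, so `Δ_∂̄² = Δ_∂ Δ_∂̄` is their sum.
-/

section Ring

variable {A : Type*} [Ring A]

theorem Ring.lie_mul (l a b : A) : ⁅l, a * b⁆ = ⁅l, a⁆ * b + a * ⁅l, b⁆ := by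
  simp only [Ring.lie_def]
  noncomm_ring

theorem Ring.lie_mul_add_mul_comm (l a b : A) :
    ⁅l, a * b + b * a⁆ = (⁅l, a⁆ * b + b * ⁅l, a⁆) + (a * ⁅l, b⁆ + ⁅l, b⁆ * a) := by
  simp only [Ring.lie_def]
  noncomm_ring

theorem mul_add_mul_mul_mul_add_mul_eq_of_anticomm {p q ps qs : A}
    (hpq : p * q + q * p = 0) (hpsqs : ps * qs + qs * ps = 0)
    (hpqs : p * qs + qs * p = 0) (hqps : q * ps + ps * q = 0) :
    (p * ps + ps * p) * (q * qs + qs * q)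
      = qs * ps * (p * q) + p * q * (qs * ps) + p * qs * (q * ps) + q * ps * (p * qs) := by
  linear_combination (norm := noncomm_ring)
    -p * q * hpsqs + p * hqps * qs - p * qs * hqps + p * hpsqs * q - hqps * (p * qs)
      + ps * hpq * qs - hpsqs * (p * q) + ps * hpqs * q

end Ring

section Kahler

variable {R A : Type*} [CommRing R] [Ring A] [Algebra R A] {c : R}

theorem mul_add_mul_eq_zero_of_lie_eq_smul (hc : IsUnit c) {l a b : A}
    (ha : a * a = 0) (hab : ⁅l, a⁆ = c • b) : a * b + b * a = 0 := by
  rw [← hc.smul_left_cancel, smul_zero, smul_add, ← mul_smul_comm, ← smul_mul_assoc, ← hab,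
    add_comm, ← Ring.lie_mul, ha, Ring.lie_def, mul_zero, zero_mul, sub_zero]

theorem mul_add_mul_eq_of_lie_eq_smul (hc : IsUnit c) {l p q ps qs : A}
    (hpq : p * q + q * p = 0) (hp : ⁅l, p⁆ = c • qs) (hq : ⁅l, q⁆ = -c • ps) :
    p * ps + ps * p = q * qs + qs * q := by
  have h := Ring.lie_mul_add_mul_comm l p q
  rw [hpq, Ring.lie_def, mul_zero, zero_mul, sub_zero, hp, hq] at h
  rw [eq_comm, ← sub_eq_zero, ← hc.smul_left_cancel, smul_zero, h]
  simp only [neg_smul, mul_neg, neg_mul, mul_smul_comm, smul_mul_assoc, smul_sub, smul_add]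
  abel

end Kahler

theorem stmt11_general {V : Type*} [AddCommGroup V] [Module ℂ V]
    (p q ps qs Lam : V →ₗ[ℂ] V)
    (hp : p ∘ₗ p = 0) (hq : q ∘ₗ q = 0) (hpq : p ∘ₗ q + q ∘ₗ p = 0)
    (hpsqs : ps ∘ₗ qs + qs ∘ₗ ps = 0)
    (hk1 : Lam ∘ₗ p - p ∘ₗ Lam = Complex.I • qs)
    (hk2 : Lam ∘ₗ q - q ∘ₗ Lam = (-Complex.I) • ps) :
    p ∘ₗ ps + q ∘ₗ qs
      + (qs ∘ₗ ps) ∘ₗ (p ∘ₗ q) + (p ∘ₗ q) ∘ₗ (qs ∘ₗ ps)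
      + (p ∘ₗ qs) ∘ₗ (q ∘ₗ ps) + (q ∘ₗ ps) ∘ₗ (p ∘ₗ qs)
    = (q ∘ₗ qs + qs ∘ₗ q) ∘ₗ (q ∘ₗ qs + qs ∘ₗ q) + p ∘ₗ ps + q ∘ₗ qs := by
  simp only [← Module.End.mul_eq_comp] at hp hq hpq hpsqs hk1 hk2 ⊢
  rw [← Ring.lie_def] at hk1 hk2
  have hI : IsUnit Complex.I := Complex.I_ne_zero.isUnit
  nth_rw 1 [← mul_add_mul_eq_of_lie_eq_smul hI hpq hk1 hk2]
  rw [mul_add_mul_mul_mul_add_mul_eq_of_anticomm hpq hpsqs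
    (mul_add_mul_eq_zero_of_lie_eq_smul hI hp hk1)
    (mul_add_mul_eq_zero_of_lie_eq_smul hI.neg hq hk2)]
  abel

/-- Under the Kähler identities, the Aeppli Laplacian
`Δ_A = ∂∂* + ∂̄∂̄* + (∂̄*∂*)(∂∂̄) + (∂∂̄)(∂̄*∂*) + (∂∂̄*)(∂̄∂*) + (∂̄∂*)(∂∂̄*)`
satisfies `Δ_A = Δ_∂̄² + ∂∂* + ∂̄∂̄*`. -/
theorem stmt11 {V : Type*} [AddCommGroup V] [Module ℂ V]
    (p q ps qs Lam : V →ₗ[ℂ] V)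
    (hp : p ∘ₗ p = 0) (hq : q ∘ₗ q = 0) (hpq : p ∘ₗ q + q ∘ₗ p = 0)
    (hps : ps ∘ₗ ps = 0) (hqs : qs ∘ₗ qs = 0) (hpsqs : ps ∘ₗ qs + qs ∘ₗ ps = 0)
    (hk1 : Lam ∘ₗ p - p ∘ₗ Lam = Complex.I • qs)
    (hk2 : Lam ∘ₗ q - q ∘ₗ Lam = (-Complex.I) • ps) :
    p ∘ₗ ps + q ∘ₗ qs
      + (qs ∘ₗ ps) ∘ₗ (p ∘ₗ q) + (p ∘ₗ q) ∘ₗ (qs ∘ₗ ps)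
      + (p ∘ₗ qs) ∘ₗ (q ∘ₗ ps) + (q ∘ₗ ps) ∘ₗ (p ∘ₗ qs)
    = (q ∘ₗ qs + qs ∘ₗ q) ∘ₗ (q ∘ₗ qs + qs ∘ₗ q) + p ∘ₗ ps + q ∘ₗ qs :=
  stmt11_general p q ps qs Lam hp hq hpq hpsqs hk1 hk2
end

section
/- The kernel of the Bott–Chern Laplacian is given by ker Δ_BC = ker ∂ ∩ ker ∂̄ ∩ ker((∂∂̄)*), where (∂∂̄)* is the adjoint of the composite ∂∘∂̄. -/
open LinearMap
open scoped InnerProductSpace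

/-!
Since `⟪T* T x, x⟫ = ‖T x‖²`, the kernel of a sum of operators `Tᵢ* Tᵢ` is the intersection of
the kernels of the `Tᵢ`. Writing `(∂∂̄)(∂∂̄)* = ((∂∂̄)*)* (∂∂̄)*` and similarly for `∂̄*∂`, the
Bott–Chern Laplacian is such a sum, and the kernels of `∂∂̄`, `∂̄*∂` and `(∂̄*∂)* = ∂*∂̄` all
contain `ker ∂ ∩ ker ∂̄`.
-/

theorem LinearMap.ker_sum_adjoint_comp_self {𝕜 E F ι : Type*} [RCLike 𝕜]
    [NormedAddCommGroup E] [InnerProductSpace 𝕜 E] [FiniteDimensional 𝕜 E]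
    [NormedAddCommGroup F] [InnerProductSpace 𝕜 F] [FiniteDimensional 𝕜 F]
    (s : Finset ι) (T : ι → E →ₗ[𝕜] F) :
    ker (∑ i ∈ s, adjoint (T i) ∘ₗ T i) = ⨅ i ∈ s, ker (T i) := by
  ext x
  simp only [mem_ker, Submodule.mem_iInf, sum_apply, comp_apply]
  constructor
  · intro hx
    have hsum : ∑ i ∈ s, ‖T i x‖ ^ 2 = 0 := by
      simpa [sum_inner, adjoint_inner_left, inner_self_eq_norm_sq]
        using congrArg (fun y => RCLike.re ⟪y, x⟫_𝕜) hx
    intro i hi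
    simpa using (Finset.sum_eq_zero_iff_of_nonneg (fun j _ => sq_nonneg ‖T j x‖)).mp hsum i hi
  · intro hx
    exact Finset.sum_eq_zero fun i hi => by rw [hx i hi, map_zero]

theorem stmt12_general {V : Type*} [NormedAddCommGroup V] [InnerProductSpace ℂ V]
    [FiniteDimensional ℂ V]
    (p q : V →ₗ[ℂ] V) :
    ker ((p ∘ₗ q) ∘ₗ adjoint (p ∘ₗ q) + adjoint (p ∘ₗ q) ∘ₗ (p ∘ₗ q)
        + (adjoint q ∘ₗ p) ∘ₗ adjoint (adjoint q ∘ₗ p)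
        + adjoint (adjoint q ∘ₗ p) ∘ₗ (adjoint q ∘ₗ p)
        + adjoint q ∘ₗ q + adjoint p ∘ₗ p)
      = ker p ⊓ ker q ⊓ ker (adjoint (p ∘ₗ q)) := by
  let T : Fin 6 → V →ₗ[ℂ] V :=
    ![adjoint (p ∘ₗ q), p ∘ₗ q, adjoint (adjoint q ∘ₗ p), adjoint q ∘ₗ p, q, p]
  calc _ = ker (∑ i, adjoint (T i) ∘ₗ T i) := by
        congr 1
        simp [Fin.sum_univ_six, T, adjoint_adjoint]
    _ = ⨅ i ∈ Finset.univ, ker (T i) := ker_sum_adjoint_comp_self _ T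
    _ = ker p ⊓ ker q ⊓ ker (adjoint (p ∘ₗ q)) := by
        ext x
        simp +contextual [Submodule.mem_iInf, Fin.forall_fin_succ, T, adjoint_comp, iff_def]

/-- In a finite-dimensional complex inner product space, the kernel of the
Bott–Chern Laplacian
`Δ_BC = (∂∂̄)(∂∂̄)* + (∂∂̄)*(∂∂̄) + (∂̄*∂)(∂̄*∂)* + (∂̄*∂)*(∂̄*∂) + ∂̄*∂̄ + ∂*∂`
is `ker ∂ ∩ ker ∂̄ ∩ ker((∂∂̄)*)`. -/
theorem stmt12 {V : Type*} [NormedAddCommGroup V] [InnerProductSpace ℂ V]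
    [FiniteDimensional ℂ V]
    (p q : V →ₗ[ℂ] V)
    (hp : p ∘ₗ p = 0) (hq : q ∘ₗ q = 0) (hpq : p ∘ₗ q + q ∘ₗ p = 0) :
    ker ((p ∘ₗ q) ∘ₗ adjoint (p ∘ₗ q) + adjoint (p ∘ₗ q) ∘ₗ (p ∘ₗ q)
        + (adjoint q ∘ₗ p) ∘ₗ adjoint (adjoint q ∘ₗ p)
        + adjoint (adjoint q ∘ₗ p) ∘ₗ (adjoint q ∘ₗ p)
        + adjoint q ∘ₗ q + adjoint p ∘ₗ p)
      = ker p ⊓ ker q ⊓ ker (adjoint (p ∘ₗ q)) :=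
  stmt12_general p q
end

section
/- Under the Kähler identities, all harmonic spaces coincide: ker Δ_∂ = ker Δ_∂̄ = ker Δ_d = ker Δ_BC = ker Δ_A, where Δ_∂ := ∂∂* + ∂*∂, Δ_∂̄ := ∂̄∂̄* + ∂̄*∂̄, Δ_d := dd* + d*d with d := ∂ + ∂̄, Δ_BC := (∂∂̄)(∂∂̄)* + (∂∂̄)*(∂∂̄) + (∂̄*∂)(∂̄*∂)* + (∂̄*∂)*(∂̄*∂) + ∂̄*∂̄ + ∂*∂, and Δ_A := ∂∂* + ∂̄∂̄* + (∂∂̄)*(∂∂̄) + (∂∂̄)(∂∂̄)* + (∂̄∂*)*(∂̄∂*) + (∂̄∂*)(∂̄∂*)*. -/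
/-!
Write `p = ∂`, `q = ∂̄`. Each Laplacian is a sum of positive operators `X X*` and `X* X`, so its
kernel is the intersection of the kernels of the `X`s; for `Δ_∂` this is `ker ∂* ∩ ker ∂`.
The Kähler identities write `∂̄*` and `∂*` as commutators with `Λ`, so `∂² = ∂̄² = 0` and
`∂∂̄ = -∂̄∂` make `∂` anticommute with `∂̄*`, `∂̄` with `∂*`, and give `Δ_∂ = Δ_∂̄`. Hence
`ker ∂* ∩ ker ∂ = ker ∂̄* ∩ ker ∂̄`, and `Δ_d = Δ_∂ + Δ_∂̄` by the anticommutation relations.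
For `Δ_BC`, the anticommutation relations put `∂* x` in `ker ∂̄* ∩ ker ∂̄ = ker ∂* ∩ ker ∂`,
so `∂ ∂* x = 0` and then `∂* x = 0`; likewise for `∂̄* x`. The Aeppli case is the same argument
for the adjoint pair `(∂*, ∂̄*)`.
-/

open LinearMap

namespace LinearMap

section Positive

variable {𝕜 E : Type*} [RCLike 𝕜] [NormedAddCommGroup E] [InnerProductSpace 𝕜 E]

open RCLike in
/-- The quadratic `t ↦ re ⟪T (x - t T x), x - t T x⟫ = -2 t ‖T x‖² + t² re ⟪T T x, T x⟫` is
nonnegative, which forces `‖T x‖ = 0`. -/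
theorem IsPositive.apply_eq_zero_of_re_inner_eq_zero {T : E →ₗ[𝕜] E} (hT : T.IsPositive)
    {x : E} (hx : re (inner 𝕜 (T x) x) = 0) : T x = 0 := by
  set a := ‖T x‖ ^ 2
  set c := re (inner 𝕜 (T (T x)) (T x))
  have hquad : ∀ t : ℝ, 0 ≤ -2 * t * a + t ^ 2 * c := fun t => by
    have h := hT.re_inner_nonneg_left (x - (t : 𝕜) • T x)
    have hsym : inner 𝕜 (T (T x)) x = inner 𝕜 (T x) (T x) := hT.isSymmetric _ _
    simp only [map_sub, map_smul, inner_sub_left, inner_sub_right, inner_smul_left,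
      inner_smul_right, hsym, conj_ofReal, inner_self_eq_norm_sq_to_K] at h
    simp only [hx, ← ofReal_pow, ← ofReal_mul, mul_sub, map_sub, re_ofReal_mul, ofReal_re] at h
    nlinarith
  have hc : 0 ≤ c := hT.re_inner_nonneg_left _
  have ha : a = 0 := by
    have h := hquad (a / (c + 1))
    have hc1 : 0 < c + 1 := by linarith
    field_simp at h
    nlinarith [sq_nonneg a, norm_nonneg (T x)]
  simpa [a] using ha

theorem IsPositive.ker_add {S T : E →ₗ[𝕜] E} (hS : S.IsPositive) (hT : T.IsPositive) :
    ker (S + T) = ker S ⊓ ker T := by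
  refine le_antisymm (fun x hx => ?_) (fun x ⟨hSx, hTx⟩ => by simp_all)
  have hsum : RCLike.re (inner 𝕜 (S x) x) + RCLike.re (inner 𝕜 (T x) x) = 0 := by
    rw [← map_add, ← inner_add_left, ← add_apply, mem_ker.mp hx, inner_zero_left, map_zero]
  have hS0 := hS.re_inner_nonneg_left x
  have hT0 := hT.re_inner_nonneg_left x
  exact ⟨hS.apply_eq_zero_of_re_inner_eq_zero (by linarith),
    hT.apply_eq_zero_of_re_inner_eq_zero (by linarith)⟩

end Positive

section Anticommutator

variable {R M : Type*} [CommRing R] [AddCommGroup M] [Module R M] {a b : M →ₗ[R] M}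

theorem apply_apply_eq_neg_of_anticomm (h : a ∘ₗ b + b ∘ₗ a = 0) (x : M) :
    a (b x) = -b (a x) :=
  eq_neg_of_add_eq_zero_left (congr($h x))

theorem anticomm_commutator_of_comp_self_eq_zero (h : a ∘ₗ a = 0) (L : M →ₗ[R] M) :
    a ∘ₗ (L ∘ₗ a - a ∘ₗ L) + (L ∘ₗ a - a ∘ₗ L) ∘ₗ a = 0 := by
  simp only [← Module.End.mul_eq_comp] at h ⊢
  calc a * (L * a - a * L) + (L * a - a * L) * a = L * (a * a) - (a * a) * L := by noncomm_ring
    _ = 0 := by simp [h]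

theorem anticomm_commutator_eq_neg (h : a ∘ₗ b + b ∘ₗ a = 0) (L : M →ₗ[R] M) :
    a ∘ₗ (L ∘ₗ b - b ∘ₗ L) + (L ∘ₗ b - b ∘ₗ L) ∘ₗ a
      = -(b ∘ₗ (L ∘ₗ a - a ∘ₗ L) + (L ∘ₗ a - a ∘ₗ L) ∘ₗ b) := by
  simp only [← Module.End.mul_eq_comp] at h ⊢
  rw [← sub_eq_zero]
  calc _ = L * (a * b + b * a) - (a * b + b * a) * L := by noncomm_ring
    _ = 0 := by simp [h]

theorem anticomm_of_commutator_eq_smul (h : a ∘ₗ a = 0) {L : M →ₗ[R] M} {c : R} (hc : IsUnit c)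
    (hL : L ∘ₗ a - a ∘ₗ L = c • b) : a ∘ₗ b + b ∘ₗ a = 0 := by
  have := anticomm_commutator_of_comp_self_eq_zero h L
  rwa [hL, comp_smul, smul_comp, ← smul_add, hc.smul_eq_zero] at this

end Anticommutator

theorem adjoint_anticomm {V : Type*} [NormedAddCommGroup V] [InnerProductSpace ℂ V]
    [FiniteDimensional ℂ V] {a b : V →ₗ[ℂ] V} (h : a ∘ₗ b + b ∘ₗ a = 0) :
    adjoint a ∘ₗ adjoint b + adjoint b ∘ₗ adjoint a = 0 := by
  simpa only [map_add, adjoint_comp, map_zero, add_comm] using congr(adjoint $h)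

end LinearMap

section Laplacians

variable {V : Type*} [NormedAddCommGroup V] [InnerProductSpace ℂ V] [FiniteDimensional ℂ V]

noncomputable def laplacian (d : V →ₗ[ℂ] V) : V →ₗ[ℂ] V := d ∘ₗ adjoint d + adjoint d ∘ₗ d

noncomputable def bottChernLaplacian (p q : V →ₗ[ℂ] V) : V →ₗ[ℂ] V :=
  (p ∘ₗ q) ∘ₗ adjoint (p ∘ₗ q) + adjoint (p ∘ₗ q) ∘ₗ (p ∘ₗ q)
    + (adjoint q ∘ₗ p) ∘ₗ adjoint (adjoint q ∘ₗ p) + adjoint (adjoint q ∘ₗ p) ∘ₗ (adjoint q ∘ₗ p)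
    + adjoint q ∘ₗ q + adjoint p ∘ₗ p

noncomputable def aeppliLaplacian (p q : V →ₗ[ℂ] V) : V →ₗ[ℂ] V :=
  p ∘ₗ adjoint p + q ∘ₗ adjoint q
    + adjoint (p ∘ₗ q) ∘ₗ (p ∘ₗ q) + (p ∘ₗ q) ∘ₗ adjoint (p ∘ₗ q)
    + adjoint (q ∘ₗ adjoint p) ∘ₗ (q ∘ₗ adjoint p)
    + (q ∘ₗ adjoint p) ∘ₗ adjoint (q ∘ₗ adjoint p)

theorem isPositive_laplacian (d : V →ₗ[ℂ] V) : (laplacian d).IsPositive :=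
  (isPositive_self_comp_adjoint d).add (isPositive_adjoint_comp_self d)

theorem ker_laplacian (d : V →ₗ[ℂ] V) : ker (laplacian d) = ker (adjoint d) ⊓ ker d := by
  rw [laplacian, (isPositive_self_comp_adjoint d).ker_add (isPositive_adjoint_comp_self d),
    ker_self_comp_adjoint, ker_adjoint_comp_self]

theorem ker_bottChernLaplacian (p q : V →ₗ[ℂ] V) :
    ker (bottChernLaplacian p q) = ker (adjoint q ∘ₗ adjoint p) ⊓ ker (p ∘ₗ q)
      ⊓ ker (adjoint p ∘ₗ q) ⊓ ker (adjoint q ∘ₗ p) ⊓ ker q ⊓ ker p := by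
  simp (maxDischargeDepth := 6) only [bottChernLaplacian, IsPositive.ker_add, IsPositive.add,
    isPositive_self_comp_adjoint, isPositive_adjoint_comp_self, ker_self_comp_adjoint,
    ker_adjoint_comp_self]
  simp only [adjoint_comp, adjoint_adjoint]

theorem ker_aeppliLaplacian (p q : V →ₗ[ℂ] V) :
    ker (aeppliLaplacian p q) = ker (adjoint p) ⊓ ker (adjoint q) ⊓ ker (p ∘ₗ q)
      ⊓ ker (adjoint q ∘ₗ adjoint p) ⊓ ker (q ∘ₗ adjoint p) ⊓ ker (p ∘ₗ adjoint q) := by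
  simp (maxDischargeDepth := 6) only [aeppliLaplacian, IsPositive.ker_add, IsPositive.add,
    isPositive_self_comp_adjoint, isPositive_adjoint_comp_self, ker_self_comp_adjoint,
    ker_adjoint_comp_self]
  simp only [adjoint_comp, adjoint_adjoint]

theorem laplacian_add_of_anticomm {p q : V →ₗ[ℂ] V}
    (hpq' : p ∘ₗ adjoint q + adjoint q ∘ₗ p = 0) (hqp' : q ∘ₗ adjoint p + adjoint p ∘ₗ q = 0) :
    laplacian (p + q) = laplacian p + laplacian q :=
  calc laplacian (p + q)
      = laplacian p + laplacian q + (p ∘ₗ adjoint q + adjoint q ∘ₗ p)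
        + (q ∘ₗ adjoint p + adjoint p ∘ₗ q) := by
        simp only [laplacian, map_add, add_comp, comp_add]
        abel
    _ = laplacian p + laplacian q := by rw [hpq', hqp', add_zero, add_zero]

theorem adjoint_apply_eq_zero_of_anticomm {a b : V →ₗ[ℂ] V} (hab : a ∘ₗ b + b ∘ₗ a = 0)
    (hab' : a ∘ₗ adjoint b + adjoint b ∘ₗ a = 0)
    (hker : ker (adjoint a) ⊓ ker a = ker (adjoint b) ⊓ ker b)
    {x : V} (ha : a x = 0) (hb : b x = 0) (hba : adjoint b (adjoint a x) = 0) :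
    adjoint a x = 0 ∧ adjoint b x = 0 := by
  have hba' : b ∘ₗ adjoint a + adjoint a ∘ₗ b = 0 := by
    simpa only [adjoint_adjoint, add_comm] using adjoint_anticomm hab'
  have hy : adjoint a x ∈ ker (adjoint b) ⊓ ker b := Submodule.mem_inf.mpr
    ⟨hba, by rw [mem_ker, apply_apply_eq_neg_of_anticomm hba', hb, map_zero, neg_zero]⟩
  rw [← hker] at hy
  have hax : adjoint a x = 0 := (ker_self_comp_adjoint a).le hy.2
  have hz : adjoint b x ∈ ker (adjoint a) ⊓ ker a := Submodule.mem_inf.mpr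
    ⟨by rw [mem_ker, apply_apply_eq_neg_of_anticomm (adjoint_anticomm hab), hax, map_zero,
        neg_zero],
      by rw [mem_ker, apply_apply_eq_neg_of_anticomm hab', ha, map_zero, neg_zero]⟩
  rw [hker] at hz
  exact ⟨hax, (ker_self_comp_adjoint b).le hz.2⟩

end Laplacians

section Kahler

open Complex

variable {V : Type*} [NormedAddCommGroup V] [InnerProductSpace ℂ V] [FiniteDimensional ℂ V]
  {p q Lam : V →ₗ[ℂ] V}

theorem laplacian_eq_of_kahler (hpq : p ∘ₗ q + q ∘ₗ p = 0)
    (hk1 : Lam ∘ₗ p - p ∘ₗ Lam = I • adjoint q) (hk2 : Lam ∘ₗ q - q ∘ₗ Lam = (-I) • adjoint p) :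
    laplacian p = laplacian q := by
  have h := anticomm_commutator_eq_neg hpq Lam
  rw [hk1, hk2] at h
  simp only [neg_smul, comp_neg, neg_comp, comp_smul, smul_comp, ← neg_add, ← smul_add,
    neg_inj] at h
  exact smul_right_injective _ I_ne_zero h

theorem ker_adjoint_inf_ker_eq_of_kahler (hpq : p ∘ₗ q + q ∘ₗ p = 0)
    (hk1 : Lam ∘ₗ p - p ∘ₗ Lam = I • adjoint q) (hk2 : Lam ∘ₗ q - q ∘ₗ Lam = (-I) • adjoint p) :
    ker (adjoint p) ⊓ ker p = ker (adjoint q) ⊓ ker q := by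
  rw [← ker_laplacian, ← ker_laplacian, laplacian_eq_of_kahler hpq hk1 hk2]

theorem ker_bottChernLaplacian_of_kahler (hp : p ∘ₗ p = 0) (hpq : p ∘ₗ q + q ∘ₗ p = 0)
    (hk1 : Lam ∘ₗ p - p ∘ₗ Lam = I • adjoint q) (hk2 : Lam ∘ₗ q - q ∘ₗ Lam = (-I) • adjoint p) :
    ker (bottChernLaplacian p q) = ker (adjoint p) ⊓ ker p := by
  have hker := ker_adjoint_inf_ker_eq_of_kahler hpq hk1 hk2
  have hpq' := anticomm_of_commutator_eq_smul hp I_ne_zero.isUnit hk1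
  rw [ker_bottChernLaplacian]
  ext x
  constructor
  · rintro ⟨⟨⟨⟨⟨hqp'x, -⟩, -⟩, -⟩, hqx⟩, hpx⟩
    exact ⟨(adjoint_apply_eq_zero_of_anticomm hpq hpq' hker hpx hqx hqp'x).1, hpx⟩
  · intro hx
    obtain ⟨-, hqx⟩ : adjoint q x = 0 ∧ q x = 0 := hker.le hx
    obtain ⟨hp'x, hpx⟩ : adjoint p x = 0 ∧ p x = 0 := hx
    simp [hpx, hqx, hp'x]

theorem ker_aeppliLaplacian_of_kahler (hq : q ∘ₗ q = 0) (hpq : p ∘ₗ q + q ∘ₗ p = 0)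
    (hk1 : Lam ∘ₗ p - p ∘ₗ Lam = I • adjoint q) (hk2 : Lam ∘ₗ q - q ∘ₗ Lam = (-I) • adjoint p) :
    ker (aeppliLaplacian p q) = ker (adjoint p) ⊓ ker p := by
  have hker := ker_adjoint_inf_ker_eq_of_kahler hpq hk1 hk2
  have hqp' := anticomm_of_commutator_eq_smul hq (neg_ne_zero.mpr I_ne_zero).isUnit hk2
  rw [ker_aeppliLaplacian]
  ext x
  constructor
  · rintro ⟨⟨⟨⟨⟨hp'x, hq'x⟩, hpqx⟩, -⟩, -⟩, -⟩
    have hqpx : q (p x) = 0 := by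
      rw [← neg_eq_zero, ← apply_apply_eq_neg_of_anticomm hpq]
      exact hpqx
    have hx := adjoint_apply_eq_zero_of_anticomm (a := adjoint p) (b := adjoint q)
      (adjoint_anticomm hpq) (by rwa [adjoint_adjoint, add_comm])
      (by rwa [adjoint_adjoint, adjoint_adjoint, inf_comm, inf_comm (ker q)]) hp'x hq'x
      (by rw [adjoint_adjoint, adjoint_adjoint]; exact hqpx)
    rw [adjoint_adjoint, adjoint_adjoint] at hx
    exact ⟨hp'x, hx.1⟩
  · intro hx
    obtain ⟨hq'x, hqx⟩ : adjoint q x = 0 ∧ q x = 0 := hker.le hx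
    obtain ⟨hp'x, -⟩ : adjoint p x = 0 ∧ p x = 0 := hx
    simp [hqx, hp'x, hq'x]

end Kahler

/-- Under the Kähler identities, all harmonic spaces coincide:
`ker Δ_∂ = ker Δ_∂̄ = ker Δ_d = ker Δ_BC = ker Δ_A`. -/
theorem stmt15 {V : Type*} [NormedAddCommGroup V] [InnerProductSpace ℂ V]
    [FiniteDimensional ℂ V]
    (p q Lam : V →ₗ[ℂ] V)
    (hp : p ∘ₗ p = 0) (hq : q ∘ₗ q = 0) (hpq : p ∘ₗ q + q ∘ₗ p = 0)
    (hk1 : Lam ∘ₗ p - p ∘ₗ Lam = Complex.I • adjoint q)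
    (hk2 : Lam ∘ₗ q - q ∘ₗ Lam = (-Complex.I) • adjoint p) :
    ker (p ∘ₗ adjoint p + adjoint p ∘ₗ p) = ker (q ∘ₗ adjoint q + adjoint q ∘ₗ q) ∧
    ker (q ∘ₗ adjoint q + adjoint q ∘ₗ q)
      = ker ((p + q) ∘ₗ adjoint (p + q) + adjoint (p + q) ∘ₗ (p + q)) ∧
    ker ((p + q) ∘ₗ adjoint (p + q) + adjoint (p + q) ∘ₗ (p + q))
      = ker ((p ∘ₗ q) ∘ₗ adjoint (p ∘ₗ q) + adjoint (p ∘ₗ q) ∘ₗ (p ∘ₗ q)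
          + (adjoint q ∘ₗ p) ∘ₗ adjoint (adjoint q ∘ₗ p)
          + adjoint (adjoint q ∘ₗ p) ∘ₗ (adjoint q ∘ₗ p)
          + adjoint q ∘ₗ q + adjoint p ∘ₗ p) ∧
    ker ((p ∘ₗ q) ∘ₗ adjoint (p ∘ₗ q) + adjoint (p ∘ₗ q) ∘ₗ (p ∘ₗ q)
          + (adjoint q ∘ₗ p) ∘ₗ adjoint (adjoint q ∘ₗ p)
          + adjoint (adjoint q ∘ₗ p) ∘ₗ (adjoint q ∘ₗ p)
          + adjoint q ∘ₗ q + adjoint p ∘ₗ p)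
      = ker (p ∘ₗ adjoint p + q ∘ₗ adjoint q
          + adjoint (p ∘ₗ q) ∘ₗ (p ∘ₗ q) + (p ∘ₗ q) ∘ₗ adjoint (p ∘ₗ q)
          + adjoint (q ∘ₗ adjoint p) ∘ₗ (q ∘ₗ adjoint p)
          + (q ∘ₗ adjoint p) ∘ₗ adjoint (q ∘ₗ adjoint p)) := by
  change ker (laplacian p) = ker (laplacian q) ∧ ker (laplacian q) = ker (laplacian (p + q)) ∧
    ker (laplacian (p + q)) = ker (bottChernLaplacian p q) ∧
    ker (bottChernLaplacian p q) = ker (aeppliLaplacian p q)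
  have hΔ := laplacian_eq_of_kahler hpq hk1 hk2
  have hker_add : ker (laplacian (p + q)) = ker (laplacian q) := by
    rw [laplacian_add_of_anticomm
      (anticomm_of_commutator_eq_smul hp Complex.I_ne_zero.isUnit hk1)
      (anticomm_of_commutator_eq_smul hq (neg_ne_zero.mpr Complex.I_ne_zero).isUnit hk2),
      (isPositive_laplacian p).ker_add (isPositive_laplacian q), hΔ, inf_idem]
  refine ⟨congrArg ker hΔ, hker_add.symm, ?_, ?_⟩
  · rw [hker_add, ← hΔ, ker_bottChernLaplacian_of_kahler hp hpq hk1 hk2, ker_laplacian]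
  · rw [ker_bottChernLaplacian_of_kahler hp hpq hk1 hk2,
      ker_aeppliLaplacian_of_kahler hq hpq hk1 hk2]
end
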